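/- arXiv:math/0508268 — 5 statements merged into one kernel-verified Lean document; each statement's English description precedes it below -/
import Mathlib

section
/- Let G = (V,E) be a bi-directed graph and P(G) the set of positive definite V×V matrices Σ with σ_ij = 0 whenever i ≠ j and i,j are not adjacent. For a vertex i with spouse set sp(i) = {j : i↔j}, the map Σ ↦ (λ_i, Σ_{i,sp(i)}, Σ_{-i,-i}) is a bijection from P(G) onto (0,∞) × ℝ^{sp(i)} × P_{-i}(G), where P_{-i}(G) denotes the set of (-i)×(-i) submatrices of matrices in P(G) and λ_i is the Schur complement σ_ii - Σ_{i,-i}(Σ_{-i,-i})^{-1}Σ_{-i,i}. -/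
/-!
Order the indices as `(-i, i)`. Then `Σ = [[Σ_{-i,-i}, Σ_{-i,i}], [Σ_{i,-i}, σ_ii]]`, and by the
Schur complement criterion `Σ` is positive definite iff `Σ_{-i,-i}` is and `λ_i > 0`.
Conversely `Σ` is recovered from `(λ_i, Σ_{i,-i}, Σ_{-i,-i})` by bordering `Σ_{-i,-i}` with the row
`Σ_{i,-i}` and the corner `σ_ii = λ_i + Σ_{i,-i} Σ_{-i,-i}⁻¹ Σ_{-i,i}`. The zero pattern makes
`Σ_{i,-i}` the extension by zero of `Σ_{i,sp(i)}`, and bordering a matrix of `P_{-i}(G)` by such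
a row preserves the pattern.
-/

open Matrix ComplexOrder

def Equiv.sumUnitSubtypeNe {n : Type*} [DecidableEq n] (i : n) : {j // j ≠ i} ⊕ Unit ≃ n :=
  (Equiv.optionEquivSumPUnit _).symm.trans (Equiv.optionSubtypeNe i)

namespace Matrix

section PosDef

variable {𝕜 m n : Type*} [RCLike 𝕜]

theorem posDef_submatrix_equiv [Fintype m] [Fintype n] {M : Matrix n n 𝕜} (e : m ≃ n) :
    (M.submatrix e e).PosDef ↔ M.PosDef :=
  ⟨fun h => by simpa using h.submatrix e.symm.injective, fun h => h.submatrix e.injective⟩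

theorem posDef_iff_posSemidef_and_det_ne_zero [Fintype n] [DecidableEq n] {M : Matrix n n 𝕜} :
    M.PosDef ↔ M.PosSemidef ∧ M.det ≠ 0 :=
  ⟨fun h => ⟨h.posSemidef, h.det_pos.ne'⟩, fun h => h.1.posDef_iff_det_ne_zero.2 h.2⟩

theorem posDef_iff_of_unique [Unique n] {M : Matrix n n 𝕜} :
    M.PosDef ↔ 0 < M default default := by
  have hdiag : M = diagonal fun _ => M default default := by
    ext j k
    simp [Subsingleton.elim j default, Subsingleton.elim k default]
  rw [hdiag, posDef_diagonal_iff]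
  simp

theorem PosDef.posDef_fromBlocks₁₁_iff [Fintype m] [DecidableEq m] [Fintype n] [DecidableEq n]
    {A : Matrix m m 𝕜} (B : Matrix m n 𝕜) (D : Matrix n n 𝕜) (hA : A.PosDef) :
    (fromBlocks A B Bᴴ D).PosDef ↔ (D - Bᴴ * A⁻¹ * B).PosDef := by
  have : Invertible A := hA.isUnit.invertible
  simp only [posDef_iff_posSemidef_and_det_ne_zero, hA.fromBlocks₁₁, det_fromBlocks₁₁,
    invOf_eq_nonsing_inv, mul_ne_zero_iff, hA.det_pos.ne', ne_eq, not_false_eq_true, true_and]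

end PosDef

section SchurComplement

variable {n R : Type*}

def dropRowCol (A : Matrix n n R) (i : n) : Matrix {j // j ≠ i} {j // j ≠ i} R :=
  A.submatrix Subtype.val Subtype.val

/-- The paper's `λ_i`, the Schur complement of `A_{-i,-i}` in `A`. -/
noncomputable def schurComplAt [Fintype n] [DecidableEq n] [CommRing R] (A : Matrix n n R)
    (i : n) : R :=
  A i i - (fun j : {j // j ≠ i} => A i j) ⬝ᵥ ((A.dropRowCol i)⁻¹ *ᵥ fun j => A j i)

variable {𝕜 : Type*} [RCLike 𝕜] [DecidableEq n]

theorem IsHermitian.submatrix_sumUnitSubtypeNe {A : Matrix n n 𝕜} (hA : A.IsHermitian) (i : n) :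
    A.submatrix (Equiv.sumUnitSubtypeNe i) (Equiv.sumUnitSubtypeNe i) =
      Matrix.fromBlocks (A.dropRowCol i) (replicateCol Unit fun j => A j i)
        (replicateCol Unit fun j => A j i)ᴴ (of fun _ _ => A i i) := by
  ext (j | _) (k | _) <;>
    simp [Equiv.sumUnitSubtypeNe, Equiv.optionEquivSumPUnit, dropRowCol, hA.apply]

theorem IsHermitian.posDef_iff_schurComplAt_pos [Fintype n] {A : Matrix n n 𝕜}
    (hA : A.IsHermitian) {i : n} (hM : (A.dropRowCol i).PosDef) :
    A.PosDef ↔ 0 < A.schurComplAt i := by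
  rw [← posDef_submatrix_equiv (Equiv.sumUnitSubtypeNe i), hA.submatrix_sumUnitSubtypeNe,
    hM.posDef_fromBlocks₁₁_iff, posDef_iff_of_unique]
  simp only [ne_eq, conjTranspose_replicateCol, PUnit.default_eq_unit, sub_apply, of_apply,
    mul_apply, replicateRow_apply, Pi.star_apply, hA.apply, replicateCol_apply, Finset.sum_mul,
    mul_assoc, sub_pos, schurComplAt, dotProduct, mulVec, Finset.mul_sum]
  rw [Finset.sum_comm]

end SchurComplement

section Border

variable {n R : Type*} [DecidableEq n]

def border (i : n) (a : R) (b : {j // j ≠ i} → R) (M : Matrix {j // j ≠ i} {j // j ≠ i} R) :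
    Matrix n n R :=
  of fun j k =>
    if hj : j = i then if hk : k = i then a else b ⟨k, hk⟩
    else if hk : k = i then b ⟨j, hj⟩ else M ⟨j, hj⟩ ⟨k, hk⟩

variable {i : n} {a : R} {b : {j // j ≠ i} → R} {M : Matrix {j // j ≠ i} {j // j ≠ i} R}

@[simp] theorem border_apply_self : border i a b M i i = a := by simp [border]

@[simp] theorem border_apply_self_val (j : {j // j ≠ i}) : border i a b M i j = b j := by
  simp [border, j.2]

@[simp] theorem border_apply_val_self (j : {j // j ≠ i}) : border i a b M j i = b j := by
  simp [border, j.2]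

@[simp] theorem border_apply_val_val (j k : {j // j ≠ i}) : border i a b M j k = M j k := by
  simp [border, j.2, k.2]

@[simp] theorem dropRowCol_border : (border i a b M).dropRowCol i = M := by
  ext j k
  simp [dropRowCol]

theorem schurComplAt_border [Fintype n] [CommRing R] :
    (border i a b M).schurComplAt i = a - b ⬝ᵥ (M⁻¹ *ᵥ b) := by
  simp [schurComplAt]

theorem IsSymm.border (hM : M.IsSymm) : (border i a b M).IsSymm := by
  ext j k
  by_cases hj : j = i <;> by_cases hk : k = i
  all_goals simp [Matrix.border, hj, hk, hM.apply]

theorem IsSymm.border_eq_self {A : Matrix n n R} (hA : A.IsSymm) (i : n) :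
    Matrix.border i (A i i) (fun j => A i j) (A.dropRowCol i) = A := by
  ext j k
  by_cases hj : j = i <;> by_cases hk : k = i
  all_goals simp [Matrix.border, dropRowCol, hj, hk, hA.apply]

theorem IsSymm.eq_of_schurComplAt_eq [Fintype n] [CommRing R] {A B : Matrix n n R}
    (hA : A.IsSymm) (hB : B.IsSymm) {i : n} (hrow : ∀ j : {j // j ≠ i}, A i j = B i j)
    (hdrop : A.dropRowCol i = B.dropRowCol i) (hschur : A.schurComplAt i = B.schurComplAt i) :
    A = B := by
  rw [← hA.border_eq_self i, ← hB.border_eq_self i] at hschur ⊢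
  rw [schurComplAt_border, schurComplAt_border, funext hrow, hdrop, sub_left_inj] at hschur
  rw [funext hrow, hdrop, hschur]

end Border

end Matrix

namespace SimpleGraph

variable {V : Type*} [Fintype V] [DecidableEq V] (G : SimpleGraph V) (i : V)

/-- The paper's `P(G)`. -/
def covMatrices : Set (Matrix V V ℝ) :=
  {A | A.PosDef ∧ ∀ j k, j ≠ k → ¬ G.Adj j k → A j k = 0}

noncomputable def schurParam (A : Matrix V V ℝ) :
    ℝ × ({j // G.Adj i j} → ℝ) × Matrix {j // j ≠ i} {j // j ≠ i} ℝ :=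
  (A.schurComplAt i, fun j => A i j, A.dropRowCol i)

theorem mapsTo_schurParam :
    Set.MapsTo (G.schurParam i) G.covMatrices
      {t | 0 < t.1 ∧ t.2.2 ∈ (Matrix.dropRowCol · i) '' G.covMatrices} := by
  rintro A hA
  have hdrop : (A.dropRowCol i).PosDef := hA.1.submatrix Subtype.val_injective
  exact ⟨(hA.1.isHermitian.posDef_iff_schurComplAt_pos hdrop).1 hA.1, A, hA, rfl⟩

theorem injOn_schurParam : Set.InjOn (G.schurParam i) G.covMatrices := by
  rintro A ⟨hA, hAzero⟩ B ⟨hB, hBzero⟩ hAB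
  simp only [schurParam, Prod.mk.injEq] at hAB
  obtain ⟨hschur, hadj, hdrop⟩ := hAB
  refine (isHermitian_iff_isSymm.1 hA.isHermitian).eq_of_schurComplAt_eq
    (isHermitian_iff_isSymm.1 hB.isHermitian) (fun j => ?_) hdrop hschur
  by_cases hij : G.Adj i j
  · exact congrFun hadj ⟨j, hij⟩
  · rw [hAzero i j (Ne.symm j.2) hij, hBzero i j (Ne.symm j.2) hij]

theorem border_mem_covMatrices {A : Matrix V V ℝ} (hA : A ∈ G.covMatrices) {a : ℝ}
    {b : {j // j ≠ i} → ℝ} (hb : ∀ j : {j // j ≠ i}, ¬ G.Adj i j → b j = 0)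
    (ha : 0 < a - b ⬝ᵥ ((A.dropRowCol i)⁻¹ *ᵥ b)) :
    Matrix.border i a b (A.dropRowCol i) ∈ G.covMatrices := by
  have hdrop : (A.dropRowCol i).PosDef := hA.1.submatrix Subtype.val_injective
  have hsymm : (Matrix.border i a b (A.dropRowCol i)).IsSymm :=
    (isHermitian_iff_isSymm.1 hdrop.isHermitian).border
  have hdrop' : ((Matrix.border i a b (A.dropRowCol i)).dropRowCol i).PosDef := by
    rwa [Matrix.dropRowCol_border]
  refine ⟨(isHermitian_iff_isSymm.2 hsymm).posDef_iff_schurComplAt_pos hdrop' |>.2 ?_,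
    fun j k hjk hadj => ?_⟩
  · rwa [Matrix.schurComplAt_border]
  by_cases hj : j = i <;> by_cases hk : k = i
  · exact absurd (hj.trans hk.symm) hjk
  · subst hj
    exact (Matrix.border_apply_self_val ⟨k, hk⟩).trans (hb _ hadj)
  · subst hk
    exact (Matrix.border_apply_val_self ⟨j, hj⟩).trans (hb _ fun h => hadj h.symm)
  · exact (Matrix.border_apply_val_val ⟨j, hj⟩ ⟨k, hk⟩).trans (hA.2 j k hjk hadj)

theorem surjOn_schurParam :
    Set.SurjOn (G.schurParam i) G.covMatrices
      {t | 0 < t.1 ∧ t.2.2 ∈ (Matrix.dropRowCol · i) '' G.covMatrices} := by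
  classical
  rintro ⟨t, v, _⟩ ⟨ht, A, hA, rfl⟩
  let b : {j // j ≠ i} → ℝ := fun j => if h : G.Adj i j then v ⟨j, h⟩ else 0
  refine ⟨Matrix.border i (t + b ⬝ᵥ ((A.dropRowCol i)⁻¹ *ᵥ b)) b (A.dropRowCol i),
    G.border_mem_covMatrices i hA (fun j hj => dif_neg hj) (by rwa [add_sub_cancel_right]), ?_⟩
  simp only [schurParam, Matrix.schurComplAt_border, add_sub_cancel_right,
    Matrix.dropRowCol_border, Prod.mk.injEq, true_and, and_true]
  funext j
  rw [Matrix.border_apply_self_val (⟨j, (G.ne_of_adj j.2).symm⟩ : {k // k ≠ i})]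
  exact dif_pos j.2

end SimpleGraph

theorem covGraph_schur_param_bijOn_general {p : ℕ} (G : SimpleGraph (Fin p))
    (i : Fin p) :
    Set.BijOn
      (fun Sig : Matrix (Fin p) (Fin p) ℝ =>
        (Sig i i -
            (fun j : {j : Fin p // j ≠ i} => Sig i (j : Fin p)) ⬝ᵥ
              ((Sig.submatrix (fun j : {j : Fin p // j ≠ i} => (j : Fin p))
                  (fun j : {j : Fin p // j ≠ i} => (j : Fin p)))⁻¹ *ᵥ
                fun j : {j : Fin p // j ≠ i} => Sig (j : Fin p) i),
          fun j : {j : Fin p // G.Adj i j} => Sig i (j : Fin p),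
          Sig.submatrix (fun j : {j : Fin p // j ≠ i} => (j : Fin p))
            (fun j : {j : Fin p // j ≠ i} => (j : Fin p))))
      {Sig : Matrix (Fin p) (Fin p) ℝ |
        Sig.PosDef ∧ ∀ j k : Fin p, j ≠ k → ¬ G.Adj j k → Sig j k = 0}
      {t : ℝ × ({j : Fin p // G.Adj i j} → ℝ) ×
          Matrix {j : Fin p // j ≠ i} {j : Fin p // j ≠ i} ℝ |
        0 < t.1 ∧
          t.2.2 ∈ (fun Sig : Matrix (Fin p) (Fin p) ℝ =>
              Sig.submatrix (fun j : {j : Fin p // j ≠ i} => (j : Fin p))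
                (fun j : {j : Fin p // j ≠ i} => (j : Fin p))) ''
            {Sig : Matrix (Fin p) (Fin p) ℝ |
              Sig.PosDef ∧ ∀ j k : Fin p, j ≠ k → ¬ G.Adj j k → Sig j k = 0}} :=
  ⟨G.mapsTo_schurParam i, G.injOn_schurParam i, G.surjOn_schurParam i⟩

/-- for a bi-directed graph `G`, the map
`Σ ↦ (λ_i, Σ_{i,sp(i)}, Σ_{-i,-i})` is a bijection from `P(G)` onto
`(0,∞) × ℝ^{sp(i)} × P_{-i}(G)`. -/
theorem covGraph_schur_param_bijOn {p : ℕ} (G : SimpleGraph (Fin p))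
    [DecidableRel G.Adj] (i : Fin p) :
    Set.BijOn
      (fun Sig : Matrix (Fin p) (Fin p) ℝ =>
        (Sig i i -
            (fun j : {j : Fin p // j ≠ i} => Sig i (j : Fin p)) ⬝ᵥ
              ((Sig.submatrix (fun j : {j : Fin p // j ≠ i} => (j : Fin p))
                  (fun j : {j : Fin p // j ≠ i} => (j : Fin p)))⁻¹ *ᵥ
                fun j : {j : Fin p // j ≠ i} => Sig (j : Fin p) i),
          fun j : {j : Fin p // G.Adj i j} => Sig i (j : Fin p),
          Sig.submatrix (fun j : {j : Fin p // j ≠ i} => (j : Fin p))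
            (fun j : {j : Fin p // j ≠ i} => (j : Fin p))))
      {Sig : Matrix (Fin p) (Fin p) ℝ |
        Sig.PosDef ∧ ∀ j k : Fin p, j ≠ k → ¬ G.Adj j k → Sig j k = 0}
      {t : ℝ × ({j : Fin p // G.Adj i j} → ℝ) ×
          Matrix {j : Fin p // j ≠ i} {j : Fin p // j ≠ i} ℝ |
        0 < t.1 ∧
          t.2.2 ∈ (fun Sig : Matrix (Fin p) (Fin p) ℝ =>
              Sig.submatrix (fun j : {j : Fin p // j ≠ i} => (j : Fin p))
                (fun j : {j : Fin p // j ≠ i} => (j : Fin p))) ''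
            {Sig : Matrix (Fin p) (Fin p) ℝ |
              Sig.PosDef ∧ ∀ j k : Fin p, j ≠ k → ¬ G.Adj j k → Sig j k = 0}} :=
  covGraph_schur_param_bijOn_general G i
end

section
/- With probability one, if n ≥ p+1 and Y^{(1)},…,Y^{(n)} are i.i.d. from a p-dimensional multivariate normal distribution with positive definite covariance, the sample covariance matrix S = (1/n) Σ_k (Y^{(k)} - Ȳ)(Y^{(k)} - Ȳ)' is positive definite. -/
/-!
With `D` the `n × p` matrix of centred observations, `S = n⁻¹ DᵀD`, so `S` is positive definite
as soon as `x ↦ D x` is injective. If `D x = 0`, all observations lie on the affine hyperplane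
`{y | (y - Ȳ) ⬝ᵥ x = 0}`; this forces `x = 0` once the observations affinely span `ℝᵖ`, which holds
when the first `p + 1` of them are affinely independent. At most `p + 1` independent points with
absolutely continuous laws are almost surely affinely independent: by Fubini, given affinely
independent `w₁, …, wₘ` with `m ≤ p`, a further point must avoid their affine span, a proper
affine subspace and hence a Lebesgue-null set.
-/

open Matrix MeasureTheory ProbabilityTheory Set Module

theorem LinearMap.eq_zero_of_affineSpan_range_eq_top {k V P W ι : Type*} [Ring k]
    [AddCommGroup V] [Module k V] [AddTorsor V P] [AddCommGroup W] [Module k W]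
    {y : ι → P} (hy : affineSpan k (Set.range y) = ⊤) (c : P) (φ : V →ₗ[k] W)
    (h : ∀ i, φ (y i -ᵥ c) = 0) : φ = 0 := by
  have hle : affineSpan k (Set.range y) ≤ AffineSubspace.mk' c (LinearMap.ker φ) := by
    rw [affineSpan_le]
    rintro _ ⟨i, rfl⟩
    exact AffineSubspace.mem_mk'.2 (h i)
  rw [hy, top_le_iff] at hle
  ext v
  have hv : v +ᵥ c ∈ AffineSubspace.mk' c (LinearMap.ker φ) := hle ▸ AffineSubspace.mem_top k V _
  simpa using AffineSubspace.mem_mk'.1 hv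

section Affine

variable {k V P : Type*} [DivisionRing k] [AddCommGroup V] [Module k V] [AddTorsor V P]

theorem AffineIndependent.fin_cons {m : ℕ} {v : P} {w : Fin m → P} (hw : AffineIndependent k w)
    (hv : v ∉ affineSpan k (range w)) : AffineIndependent k (Fin.cons v w : Fin (m + 1) → P) := by
  refine AffineIndependent.affineIndependent_of_notMem_span (k := k) (i := 0) ?_ ?_
  · convert hw.comp_embedding (finSuccAboveEquiv (0 : Fin (m + 1))).symm.toEmbedding using 1
    ext ⟨x, hx⟩
    obtain ⟨j, rfl⟩ := Fin.exists_succ_eq.2 hx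
    rfl
  · have himage : (Fin.cons v w : Fin (m + 1) → P) '' {x | x ≠ 0} = range w := by
      ext
      simp [Fin.exists_fin_succ]
    simpa [himage] using hv

theorem affineSpan_range_eq_top_of_affineIndependent_comp [FiniteDimensional k V]
    {ι κ : Type*} [Fintype κ] {y : ι → P} (f : κ → ι) (hcard : Fintype.card κ = finrank k V + 1)
    (h : AffineIndependent k (y ∘ f)) : affineSpan k (range y) = ⊤ :=
  top_unique <| (h.affineSpan_eq_top_iff_card_eq_finrank_add_one.2 hcard).symm.le.trans <|
    affineSpan_mono k (range_comp_subset_range f y)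

end Affine

section GeneralPosition

variable {E : Type*} [NormedAddCommGroup E] [NormedSpace ℝ E] [MeasurableSpace E] [BorelSpace E]
  [FiniteDimensional ℝ E]

theorem measure_pi_setOf_not_affineIndependent (ν : Measure E) [ν.IsAddHaarMeasure] :
    ∀ {m : ℕ}, m ≤ finrank ℝ E + 1 → ∀ (μ : Fin m → Measure E) [∀ i, SigmaFinite (μ i)],
      (∀ i, μ i ≪ ν) → Measure.pi μ {y | ¬ AffineIndependent ℝ y} = 0
  | 0, _, μ, _, _ => by simp [affineIndependent_of_subsingleton]
  | m + 1, hm, μ, _, hμ => by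
    have hbad : MeasurableSet {y : Fin (m + 1) → E | ¬ AffineIndependent ℝ y} :=
      isOpen_setOfPred_affineIndependent.measurableSet.compl
    rw [← (measurePreserving_piFinSuccAbove μ 0).symm.measure_preimage hbad.nullMeasurableSet,
      Measure.prod_apply_symm ((MeasurableEquiv.piFinSuccAbove _ 0).symm.measurable hbad)]
    refine lintegral_eq_zero_of_ae_eq_zero ?_
    filter_upwards [ae_iff.2 (measure_pi_setOf_not_affineIndependent ν (by omega) _
      fun j => hμ _)] with w hw
    have hspan : affineSpan ℝ (range w) ≠ ⊤ := fun h => by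
      have := hw.affineSpan_eq_top_iff_card_eq_finrank_add_one.1 h
      rw [Fintype.card_fin] at this
      omega
    refine measure_mono_null (fun v hv => ?_) (hμ 0 (Measure.addHaar_affineSubspace ν _ hspan))
    by_contra hv'
    apply hv
    simpa [MeasurableEquiv.piFinSuccAbove_symm_apply, Fin.insertNthEquiv, Fin.insertNth_zero']
      using hw.fin_cons hv'

end GeneralPosition

section SampleCovariance

variable {ι : Type*} {n : ℕ}

noncomputable def sampleMean (y : Fin n → ι → ℝ) : ι → ℝ := (n : ℝ)⁻¹ • ∑ k, y k

noncomputable def sampleCovariance (y : Fin n → ι → ℝ) : Matrix ι ι ℝ :=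
  of fun i j => (n : ℝ)⁻¹ * ∑ k, (y k i - sampleMean y i) * (y k j - sampleMean y j)

noncomputable def centeredData (y : Fin n → ι → ℝ) : Matrix (Fin n) ι ℝ :=
  of fun k => y k - sampleMean y

theorem sampleCovariance_eq_smul_transpose_mul (y : Fin n → ι → ℝ) :
    sampleCovariance y = (n : ℝ)⁻¹ • ((centeredData y)ᵀ * centeredData y) := by
  ext i j
  simp [sampleCovariance, centeredData, mul_apply]

variable [Fintype ι] {y : Fin n → ι → ℝ}

theorem injective_mulVec_centeredData (hy : affineSpan ℝ (range y) = ⊤) :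
    Function.Injective (centeredData y).mulVec := by
  suffices LinearMap.ker (mulVecLin (centeredData y)) = ⊥ from LinearMap.ker_eq_bot.1 this
  refine LinearMap.ker_eq_bot'.2 fun x hx => ?_
  have hφ := LinearMap.eq_zero_of_affineSpan_range_eq_top hy (sampleMean y)
    ((dotProductBilin ℝ ℝ (A := ℝ) (m := ι)).flip x) fun k => congrFun hx k
  exact dotProduct_self_eq_zero.1 (LinearMap.congr_fun hφ x)

theorem posDef_sampleCovariance (hy : affineSpan ℝ (range y) = ⊤) :
    (sampleCovariance y).PosDef := by
  have hn : 0 < n := by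
    have : (affineSpan ℝ (range y) : Set (ι → ℝ)).Nonempty := by
      rw [hy]
      exact ⟨0, AffineSubspace.mem_top ℝ _ 0⟩
    exact Fin.pos_iff_nonempty.2 (range_nonempty_iff_nonempty.1 ((affineSpan_nonempty ℝ).1 this))
  rw [sampleCovariance_eq_smul_transpose_mul]
  exact (PosDef.conjTranspose_mul_self _ (injective_mulVec_centeredData hy)).smul (by positivity)

end SampleCovariance

theorem sample_covariance_posDef_general {p n : ℕ} (hn : p + 1 ≤ n)
    {Ω : Type*} [MeasurableSpace Ω] (P : Measure Ω) [IsProbabilityMeasure P]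
    (μv : Fin p → ℝ) (Sig : Matrix (Fin p) (Fin p) ℝ)
    (Y : Fin n → Ω → (Fin p → ℝ)) (hmeas : ∀ k, Measurable (Y k))
    (hindep : iIndepFun Y P)
    (hlaw : ∀ k, Measure.map (Y k) P =
      volume.withDensity (fun x : Fin p → ℝ =>
        ENNReal.ofReal (((2 * Real.pi) ^ p * Sig.det) ^ (-(1/2 : ℝ)) *
          Real.exp (-(1/2 : ℝ) * ((x - μv) ⬝ᵥ (Sig⁻¹ *ᵥ (x - μv))))))) :
    ∀ᵐ ω ∂P,
      (Matrix.of fun i j : Fin p =>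
        (n : ℝ)⁻¹ * ∑ k : Fin n,
          (Y k ω i - ((n : ℝ)⁻¹ • ∑ m : Fin n, Y m ω) i) *
          (Y k ω j - ((n : ℝ)⁻¹ • ∑ m : Fin n, Y m ω) j)).PosDef := by
  have : ∀ k, IsProbabilityMeasure (P.map (Y k)) :=
    fun k => Measure.isProbabilityMeasure_map (hmeas k).aemeasurable
  have hjoint_law : P.map (fun ω k => Y (Fin.castLE hn k) ω) =
      Measure.pi fun k => P.map (Y (Fin.castLE hn k)) :=
    (iIndepFun_iff_map_fun_eq_pi_map fun k => (hmeas _).aemeasurable).1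
      (hindep.precomp (Fin.castLE_injective hn))
  have hgen : ∀ᵐ y ∂(Measure.pi fun k => P.map (Y (Fin.castLE hn k))), AffineIndependent ℝ y :=
    ae_iff.2 <| measure_pi_setOf_not_affineIndependent volume (by simp) _ fun k => by
      rw [hlaw]
      exact withDensity_absolutelyContinuous _ _
  rw [← hjoint_law] at hgen
  filter_upwards [ae_of_ae_map (aemeasurable_pi_lambda _ fun k => (hmeas _).aemeasurable) hgen]
    with ω hω
  exact posDef_sampleCovariance
    (affineSpan_range_eq_top_of_affineIndependent_comp (Fin.castLE hn) (by simp) hω)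

/-- if `n ≥ p+1` and `Y⁽¹⁾,…,Y⁽ⁿ⁾` are i.i.d. from a `p`-dimensional
multivariate normal distribution (given by its Lebesgue density) with positive definite
covariance `Σ`, then almost surely the sample covariance matrix
`S = (1/n) ∑ₖ (Y⁽ᵏ⁾ - Ȳ)(Y⁽ᵏ⁾ - Ȳ)'` is positive definite. -/
theorem sample_covariance_posDef {p n : ℕ} (hn : p + 1 ≤ n)
    {Ω : Type*} [MeasurableSpace Ω] (P : Measure Ω) [IsProbabilityMeasure P]
    (μv : Fin p → ℝ) (Sig : Matrix (Fin p) (Fin p) ℝ) (hSig : Sig.PosDef)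
    (Y : Fin n → Ω → (Fin p → ℝ)) (hmeas : ∀ k, Measurable (Y k))
    (hindep : iIndepFun Y P)
    (hlaw : ∀ k, Measure.map (Y k) P =
      volume.withDensity (fun x : Fin p → ℝ =>
        ENNReal.ofReal (((2 * Real.pi) ^ p * Sig.det) ^ (-(1/2 : ℝ)) *
          Real.exp (-(1/2 : ℝ) * ((x - μv) ⬝ᵥ (Sig⁻¹ *ᵥ (x - μv))))))) :
    ∀ᵐ ω ∂P,
      (Matrix.of fun i j : Fin p =>
        (n : ℝ)⁻¹ * ∑ k : Fin n,
          (Y k ω i - ((n : ℝ)⁻¹ • ∑ m : Fin n, Y m ω) i) *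
          (Y k ω j - ((n : ℝ)⁻¹ • ∑ m : Fin n, Y m ω) j)).PosDef :=
  sample_covariance_posDef_general hn P μv Sig Y hmeas hindep hlaw
end

section
/- For Σ ∈ P(G) and C ⊆ V a complete set (all pairs in C are adjacent in G), define sp(C) = (∪_{i∈C} sp(i)) \ C and nsp(C) = V \ (C ∪ sp(C)). Then Σ_{C,nsp(C)} = 0, and consequently Σ_{C,-C}(Σ_{-C,-C})^{-1} y = Σ_{C,sp(C)} [(Σ_{-C,-C})^{-1}]_{sp(C),-C} y for all y ∈ ℝ^{-C}. -/
open Matrix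

/-- for `Σ ∈ P(G)` and a complete set `C`, one has `Σ_{C,nsp(C)} = 0` and the
regression identity `Σ_{C,-C}(Σ_{-C,-C})⁻¹ y = Σ_{C,sp(C)} [(Σ_{-C,-C})⁻¹]_{sp(C),-C} y`. -/
theorem complete_set_regression {V : Type*} [Fintype V] [DecidableEq V]
    (G : SimpleGraph V) [DecidableRel G.Adj] (Sig : Matrix V V ℝ)
    (hpos : Sig.PosDef)
    (hzero : ∀ j k : V, j ≠ k → ¬ G.Adj j k → Sig j k = 0)
    (C : Finset V) (hcomplete : ∀ i ∈ C, ∀ j ∈ C, i ≠ j → G.Adj i j) :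
    (∀ i ∈ C, ∀ j : V, j ∉ C →
      j ∉ Finset.univ.filter (fun j : V => j ∉ C ∧ ∃ i ∈ C, G.Adj i j) →
      Sig i j = 0) ∧
    (∀ i ∈ C, ∀ y : {j : V // j ∉ C} → ℝ,
      (fun j : {j : V // j ∉ C} => Sig i (j : V)) ⬝ᵥ
          ((Sig.submatrix (fun j : {j : V // j ∉ C} => (j : V))
              (fun j : {j : V // j ∉ C} => (j : V)))⁻¹ *ᵥ y) =
        ∑ j : {j : V // j ∈ Finset.univ.filter
            (fun j : V => j ∉ C ∧ ∃ i ∈ C, G.Adj i j)},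
          Sig i (j : V) *
            ((Sig.submatrix (fun j : {j : V // j ∉ C} => (j : V))
                (fun j : {j : V // j ∉ C} => (j : V)))⁻¹ *ᵥ y)
              ⟨(j : V), (Finset.mem_filter.mp j.2).2.1⟩) := by
  have hz : ∀ i ∈ C, ∀ j : V, j ∉ C →
      j ∉ Finset.univ.filter (fun j : V => j ∉ C ∧ ∃ i ∈ C, G.Adj i j) →
      Sig i j = 0 := by
    intro i hi j hj hjn
    have hne : i ≠ j := fun h => hj (h ▸ hi)
    apply hzero i j hne
    intro hadj
    exact hjn (Finset.mem_filter.mpr ⟨Finset.mem_univ _, hj, ⟨i, hi, hadj⟩⟩)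
  refine ⟨hz, ?_⟩
  intro i hi y
  set v := ((Sig.submatrix (fun j : {j : V // j ∉ C} => (j : V))
      (fun j : {j : V // j ∉ C} => (j : V)))⁻¹ *ᵥ y) with hv
  show ∑ j : {j : V // j ∉ C}, Sig i (j : V) * v j = _
  rw [← Finset.sum_subset (Finset.filter_subset
      (fun j : {j : V // j ∉ C} => ∃ i' ∈ C, G.Adj i' (j : V)) Finset.univ)
      (fun j _ hjn => by
        have : Sig i (j : V) = 0 := by
          apply hz i hi j j.2
          intro hmem
          exact hjn (Finset.mem_filter.mpr ⟨Finset.mem_univ _,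
            (Finset.mem_filter.mp hmem).2.2⟩)
        rw [this, zero_mul])]
  refine Finset.sum_bij (fun (j : {j : V // j ∉ C}) hj =>
      (⟨(j : V), Finset.mem_filter.mpr ⟨Finset.mem_univ _, j.2,
        (Finset.mem_filter.mp hj).2⟩⟩ : {j : V // j ∈ Finset.univ.filter
          (fun j : V => j ∉ C ∧ ∃ i ∈ C, G.Adj i j)})) ?_ ?_ ?_ ?_
  · intro j hj; exact Finset.mem_univ _
  · intro a ha b hb h
    simp only [Subtype.mk.injEq] at h
    exact Subtype.ext h
  · intro b _
    refine ⟨⟨(b : V), (Finset.mem_filter.mp b.2).2.1⟩, ?_, rfl⟩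
    exact Finset.mem_filter.mpr ⟨Finset.mem_univ _, (Finset.mem_filter.mp b.2).2.2⟩
  · intro j hj
    rfl
end

section
/- Let S be symmetric positive definite and ℓ(Σ) = -log det Σ - tr(Σ^{-1} S). Then for any real c, the superlevel set {Σ positive definite, symmetric : ℓ(Σ) ≥ c} is a compact subset of the space of symmetric matrices. -/
/-!
Pass to the precision matrix `K = Σ⁻¹`, in which `ℓ` becomes `log det K - tr (K S)`.
If `S ≥ e • 1` with `e > 0`, then `tr (K S) ≥ e tr K`, while applying `log x ≤ x - 1` to the
eigenvalues of `(e / 2) K` gives `log det K ≤ (e / 2) tr K + const`. Hence `tr K` is bounded on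
a superlevel set, and so are the entries of the positive semidefinite `K`. On the superlevel set
also `log det K ≥ c`, so its limit points have `det K ≥ exp c > 0`: they stay positive definite,
where `ℓ` is continuous, and the set is closed. It is therefore compact, and matrix inversion,
continuous on invertible matrices, maps it onto the superlevel set in `Σ`.
-/

open Matrix

open scoped MatrixOrder ComplexOrder

namespace Matrix

section RCLike

variable {n 𝕜 : Type*} [Fintype n] [RCLike 𝕜]

lemma isClosed_setOf_posSemidef : IsClosed {A : Matrix n n 𝕜 | A.PosSemidef} := by
  simp only [posSemidef_iff_dotProduct_mulVec, Set.ofPred_and, Set.ofPred_forall]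
  exact (isClosed_eq continuous_id.matrix_conjTranspose continuous_id).inter <|
    isClosed_iInter fun x => isClosed_le continuous_const
      (continuous_const.dotProduct (continuous_id.matrix_mulVec continuous_const))

variable [DecidableEq n]

lemma PosSemidef.trace_mul_nonneg {A B : Matrix n n 𝕜} (hA : A.PosSemidef) (hB : B.PosSemidef) :
    0 ≤ (A * B).trace := by
  obtain ⟨C, rfl⟩ := CStarAlgebra.nonneg_iff_eq_star_mul_self.mp hB.nonneg
  rw [← mul_assoc, trace_mul_comm, ← mul_assoc]
  exact (hA.mul_mul_conjTranspose_same C).trace_nonneg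

lemma PosDef.exists_pos_posSemidef_sub_smul_one {A : Matrix n n 𝕜} (hA : A.PosDef) :
    ∃ e : ℝ, 0 < e ∧ (A - e • 1).PosSemidef := by
  cases isEmpty_or_nonempty n
  · refine ⟨1, one_pos, ?_⟩
    rw [Subsingleton.elim (A - (1 : ℝ) • 1) 0]
    exact .zero
  obtain ⟨e, he, heA⟩ := (CFC.exists_pos_algebraMap_le_iff hA.isHermitian.isSelfAdjoint).2
    fun x hx => hA.isStrictlyPositive.spectrum_pos hx
  exact ⟨e, he, by simpa [le_iff, Algebra.algebraMap_eq_smul_one] using heA⟩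

end RCLike

lemma continuousOn_nonsing_inv {n R : Type*} [Fintype n] [DecidableEq n] [Field R]
    [TopologicalSpace R] [IsTopologicalDivisionRing R] :
    ContinuousOn (fun A : Matrix n n R => A⁻¹) {A | A.det ≠ 0} := by
  simp only [inv_def, Ring.inverse_eq_inv']
  exact (continuous_id.matrix_det.continuousOn.inv₀ fun _ h => h).smul
    continuous_id.matrix_adjugate.continuousOn

variable {n : Type*} [Fintype n]

lemma PosSemidef.abs_apply_le_trace {A : Matrix n n ℝ} (hA : A.PosSemidef) (i j : n) :
    |A i j| ≤ A.trace := by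
  classical
  have hsymm : A j i = A i j := by
    simpa using congrFun (congrFun hA.isHermitian i) j
  have hdiag (k : n) : A k k ≤ A.trace :=
    Finset.single_le_sum (f := A.diag) (fun _ _ => hA.diag_nonneg) (Finset.mem_univ k)
  have hplus := hA.dotProduct_mulVec_nonneg (Pi.single i 1 + Pi.single j 1)
  have hminus := hA.dotProduct_mulVec_nonneg (Pi.single i 1 - Pi.single j 1)
  simp only [star_trivial, mulVec_add, mulVec_sub, mulVec_single, dotProduct_add, dotProduct_sub,
    add_dotProduct, sub_dotProduct, single_dotProduct, MulOpposite.op_one,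
    col_apply, one_smul, one_mul] at hplus hminus
  rw [abs_le]
  constructor <;> linarith [hdiag i, hdiag j]

lemma isCompact_of_isClosed_of_trace_le {K : Set (Matrix n n ℝ)} (hK : IsClosed K) {b : ℝ}
    (hb : ∀ A ∈ K, A.PosSemidef ∧ A.trace ≤ b) : IsCompact K := by
  have hbox : IsCompact (Set.univ.pi fun _ : n => Set.univ.pi fun _ : n => Set.Icc (-b) b) :=
    isCompact_univ_pi fun _ => isCompact_univ_pi fun _ => isCompact_Icc
  refine hbox.of_isClosed_subset hK fun A hA =>
    Set.mem_univ_pi.2 fun i => Set.mem_univ_pi.2 fun j => ?_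
  obtain ⟨hpsd, htr⟩ := hb A hA
  exact abs_le.1 ((hpsd.abs_apply_le_trace i j).trans htr)

variable [DecidableEq n]

lemma PosDef.log_det_le_mul_trace {A : Matrix n n ℝ} (hA : A.PosDef) {r : ℝ} (hr : 0 < r) :
    Real.log A.det ≤ r * A.trace - Fintype.card n * (1 + Real.log r) := by
  set μ := hA.isHermitian.eigenvalues
  have hlog (i : n) : Real.log (μ i) ≤ r * μ i - (1 + Real.log r) := by
    have hpos := hA.eigenvalues_pos i
    have := Real.log_le_sub_one_of_pos (mul_pos hr hpos)
    rw [Real.log_mul hr.ne' hpos.ne'] at this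
    linarith
  rw [hA.isHermitian.det_eq_prod_eigenvalues, hA.isHermitian.trace_eq_sum_eigenvalues]
  simp only [RCLike.ofReal_real_eq_id, id]
  rw [Real.log_prod fun i _ => (hA.eigenvalues_pos i).ne', Finset.mul_sum]
  calc _ ≤ ∑ i, (r * μ i - (1 + Real.log r)) := Finset.sum_le_sum fun i _ => hlog i
    _ = _ := by simp [Finset.sum_sub_distrib, mul_add, μ]

end Matrix

section precisionLogLik

variable {n : Type*} [Fintype n] [DecidableEq n]

noncomputable def precisionLogLik (S K : Matrix n n ℝ) : ℝ :=
  Real.log K.det - (K * S).trace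

lemma precisionLogLik_inv (S A : Matrix n n ℝ) :
    precisionLogLik S A⁻¹ = -Real.log A.det - (A⁻¹ * S).trace := by
  rw [precisionLogLik, det_nonsing_inv, Ring.inverse_eq_inv', Real.log_inv]

variable {S : Matrix n n ℝ}

lemma precisionLogLik_le {e : ℝ} (he : 0 < e) (hS : (S - e • 1).PosSemidef)
    {K : Matrix n n ℝ} (hK : K.PosDef) :
    precisionLogLik S K ≤ -(e / 2) * K.trace - Fintype.card n * (1 + Real.log (e / 2)) := by
  have htrace : e * K.trace ≤ (K * S).trace := by
    have := hK.posSemidef.trace_mul_nonneg hS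
    rwa [Matrix.mul_sub, trace_sub, mul_smul_comm, mul_one, trace_smul, smul_eq_mul,
      sub_nonneg] at this
  have := hK.log_det_le_mul_trace (half_pos he)
  rw [precisionLogLik]
  linarith

lemma isClosed_setOf_le_precisionLogLik (hS : S.PosSemidef) (c : ℝ) :
    IsClosed {K : Matrix n n ℝ | K.PosDef ∧ c ≤ precisionLogLik S K} := by
  -- `exp c ≤ det K` keeps limit points away from the singular matrices, where `log det` jumps.
  set s := {K : Matrix n n ℝ | K.PosSemidef ∧ Real.exp c ≤ K.det}
  have hs : IsClosed s :=
    isClosed_setOf_posSemidef.inter (isClosed_le continuous_const continuous_id.matrix_det)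
  have hcont : ContinuousOn (precisionLogLik S) s :=
    (continuous_id.matrix_det.continuousOn.log fun _ hK => ((Real.exp_pos c).trans_le hK.2).ne').sub
      (continuous_id.matrix_mul continuous_const).matrix_trace.continuousOn
  convert hcont.preimage_isClosed_of_isClosed hs isClosed_Ici using 1
  ext K
  refine ⟨fun ⟨hK, hc⟩ => ⟨⟨hK.posSemidef, ?_⟩, hc⟩, fun ⟨⟨hK, hdet⟩, hc⟩ => ⟨?_, hc⟩⟩
  · have := hK.posSemidef.trace_mul_nonneg hS
    rw [precisionLogLik] at hc
    rw [← Real.le_log_iff_exp_le hK.det_pos]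
    linarith
  · exact hK.posDef_iff_det_ne_zero.2 ((Real.exp_pos c).trans_le hdet).ne'

lemma isCompact_setOf_le_precisionLogLik (hS : S.PosDef) (c : ℝ) :
    IsCompact {K : Matrix n n ℝ | K.PosDef ∧ c ≤ precisionLogLik S K} := by
  obtain ⟨e, he, heS⟩ := hS.exists_pos_posSemidef_sub_smul_one
  refine isCompact_of_isClosed_of_trace_le (isClosed_setOf_le_precisionLogLik hS.posSemidef c)
    (b := (-c - Fintype.card n * (1 + Real.log (e / 2))) / (e / 2)) fun K ⟨hK, hc⟩ => ?_
  refine ⟨hK.posSemidef, (le_div_iff₀ (half_pos he)).2 ?_⟩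
  linarith [precisionLogLik_le he heS hK]

end precisionLogLik

/-- for symmetric positive definite `S` and
`ℓ(Σ) = -log det Σ - tr(Σ⁻¹ S)`, every superlevel set
`{Σ pos. def. symmetric : ℓ(Σ) ≥ c}` is compact. -/
theorem superlevel_set_compact {p : ℕ} (S : Matrix (Fin p) (Fin p) ℝ)
    (hS : S.PosDef) (c : ℝ) :
    IsCompact {Sig : Matrix (Fin p) (Fin p) ℝ |
      Sig.PosDef ∧ Sig.IsSymm ∧
        c ≤ -Real.log Sig.det - (Sig⁻¹ * S).trace} := by
  have hK := (isCompact_setOf_le_precisionLogLik hS c).image_of_continuousOn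
    (continuousOn_nonsing_inv.mono fun K hK => hK.1.det_pos.ne')
  convert hK using 1
  ext Sig
  simp only [Set.mem_ofPred_eq, Set.mem_image, ← precisionLogLik_inv]
  constructor
  · rintro ⟨hSig, -, hc⟩
    exact ⟨Sig⁻¹, ⟨hSig.inv, hc⟩, nonsing_inv_nonsing_inv _ hSig.det_pos.ne'.isUnit⟩
  · rintro ⟨K, ⟨hK, hc⟩, rfl⟩
    refine ⟨hK.inv, isHermitian_iff_isSymm.1 hK.inv.isHermitian, ?_⟩
    rwa [nonsing_inv_nonsing_inv _ hK.det_pos.ne'.isUnit]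
end

section
/- Let Σ be positive definite with zero pattern given by graph G, and fix index i. Among all positive definite matrices Σ̃ ∈ P(G) with Σ̃_{-i,-i} = Σ_{-i,-i}, the function ℓ(Σ̃) = -log det Σ̃ - tr(Σ̃^{-1} S) (with S positive definite) has a unique maximizer, provided S is positive definite. -/
/-!
Write `w = T⁻¹ eᵢ` for `T` in the section. Since `T⁻¹ i i = adj(T) i i / det T` and
`adj(T) i i = det T_{-i,-i}` is fixed, and since `T⁻¹ - w wᵀ / wᵢ` is the inverse of the fixed block
`T_{-i,-i}` padded by zeros, `ℓ(T) = log wᵢ - wᵀ S w / wᵢ + const`. The map `T ↦ w` is a bijection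
from the section onto `{w ∈ W | wᵢ > 0}`, where the subspace `W` is cut out by the equations of
`T w = eᵢ` at the non-neighbours of `i`; its inverse is an explicit rank-two correction of `Σ`.
Writing `w = a u` with `uᵢ = 1`, the reduced objective is `log a - a uᵀ S u`, which has a unique
maximizer: `u` is the least squares solution over the affine space `{u ∈ W | uᵢ = 1}` (the
pseudo-variable regression), and then `a = (uᵀ S u)⁻¹`.
-/

open Matrix

namespace Matrix

variable {n : Type*}

def EqOffLine {α : Type*} (i : n) (A B : Matrix n n α) : Prop :=
  ∀ j k, j ≠ i → k ≠ i → A j k = B j k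

section EqOffLine

variable {α : Type*} {i : n} {A B C : Matrix n n α}

lemma EqOffLine.symm (h : EqOffLine i A B) : EqOffLine i B A :=
  fun j k hj hk => (h j k hj hk).symm

lemma EqOffLine.trans (h : EqOffLine i A B) (h' : EqOffLine i B C) : EqOffLine i A C :=
  fun j k hj hk => (h j k hj hk).trans (h' j k hj hk)

end EqOffLine

variable [Fintype n] [DecidableEq n]

section Adjugate

variable {R : Type*} [CommRing R] {i : n} {A B : Matrix n n R}

/-- `adjugate A i i` is the determinant of `A` with row `i` replaced by `eᵢ`, and also (by
transposition) with column `i` replaced by `eᵢ`; so it depends on neither row nor column `i`. -/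
lemma adjugate_apply_self_eq (h : EqOffLine i A B) : adjugate A i i = adjugate B i i := by
  have hcol : ∀ M : Matrix n n R, adjugate M i i = (M.updateCol i (Pi.single i 1)).det := by
    intro M
    rw [← transpose_apply (adjugate M), adjugate_transpose, adjugate_apply, updateRow_transpose,
      det_transpose]
  set N := A.updateCol i (B.col i)
  have hAN : adjugate A i i = adjugate N i i := by
    rw [hcol, hcol, updateCol_idem]
  have hNB : N.updateRow i (Pi.single i 1) = B.updateRow i (Pi.single i 1) := by
    ext j k
    by_cases hj : j = i
    · simp [hj]
    by_cases hk : k = i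
    · simp [N, hj, hk]
    · simp [N, hj, hk, h j k hj hk]
  rw [hAN, adjugate_apply, hNB, ← adjugate_apply]

lemma det_mul_inv_apply_self (hA : IsUnit A.det) (i : n) :
    A.det * A⁻¹ i i = adjugate A i i := by
  rw [inv_def, Matrix.smul_apply, smul_eq_mul, Ring.mul_inverse_cancel_left _ _ hA]

lemma mulVec_col_inv (hA : IsUnit A.det) (i : n) : A *ᵥ A⁻¹.col i = Pi.single i 1 := by
  rw [← mulVec_single_one, mulVec_mulVec, mul_nonsing_inv _ hA, one_mulVec]

lemma col_inv_eq_of_mulVec_eq_single (hA : IsUnit A.det) {w : n → R}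
    (h : A *ᵥ w = Pi.single i 1) : A⁻¹.col i = w := by
  rw [← mulVec_single_one, ← h, mulVec_mulVec, nonsing_inv_mul _ hA, one_mulVec]

end Adjugate

lemma dotProduct_mulVec_eq_of_eqOffLine {R : Type*} [CommSemiring R] {i : n} {A B : Matrix n n R}
    (h : EqOffLine i A B) {v : n → R} (hv : v i = 0) : v ⬝ᵥ A *ᵥ v = v ⬝ᵥ B *ᵥ v := by
  simp only [dotProduct, mulVec, Finset.mul_sum]
  refine Finset.sum_congr rfl fun j _ => Finset.sum_congr rfl fun k _ => ?_
  by_cases hj : j = i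
  · simp [hj, hv]
  by_cases hk : k = i
  · simp [hk, hv]
  rw [h j k hj hk]

section Deflation

variable {K : Type*} [Field K] {i : n} {T T' : Matrix n n K}

/-- The inverse of the block `T_{-i,-i}`, padded by zeros in row and column `i`. -/
noncomputable def deflatedInv (i : n) (T : Matrix n n K) : Matrix n n K :=
  T⁻¹ - (T⁻¹ i i)⁻¹ • vecMulVec (T⁻¹.col i) (T⁻¹.col i)

lemma deflatedInv_apply_self_left (hT : T.IsSymm) (hii : T⁻¹ i i ≠ 0) (k : n) :
    deflatedInv i T i k = 0 := by
  have hsymm : T⁻¹ k i = T⁻¹ i k := by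
    rw [← transpose_apply T⁻¹, transpose_nonsing_inv, hT.eq]
  rw [deflatedInv, Matrix.sub_apply, Matrix.smul_apply, vecMulVec_apply, col_apply, col_apply,
    hsymm, smul_eq_mul, inv_mul_cancel_left₀ hii, sub_self]

lemma mul_deflatedInv_apply (hT : IsUnit T.det) {j : n} (hj : j ≠ i) (k : n) :
    (T * deflatedInv i T) j k = (1 : Matrix n n K) j k := by
  rw [deflatedInv, Matrix.mul_sub, mul_nonsing_inv _ hT, Matrix.mul_smul, mul_vecMulVec,
    mulVec_col_inv hT]
  simp [vecMulVec_apply, hj]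

lemma trace_inv_mul_eq (i : n) (T S : Matrix n n K) :
    (T⁻¹ * S).trace = (deflatedInv i T * S).trace + T⁻¹.col i ⬝ᵥ S *ᵥ T⁻¹.col i / T⁻¹ i i := by
  conv_lhs => rw [← sub_add_cancel T⁻¹ ((T⁻¹ i i)⁻¹ • vecMulVec (T⁻¹.col i) (T⁻¹.col i))]
  rw [Matrix.add_mul, trace_add, Matrix.smul_mul, trace_smul, vecMulVec_mul, trace_vecMulVec,
    dotProduct_mulVec, dotProduct_comm, smul_eq_mul, div_eq_inv_mul]
  rfl

end Deflation

section Completion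

variable {K : Type*} [Field K] (Sig : Matrix n n K) (i : n) (w : n → K)

/-- The matrix that agrees with `Sig` off row and column `i` and maps `w` to `eᵢ`. -/
noncomputable def lineCompletion : Matrix n n K :=
  Sig - (w i)⁻¹ • (vecMulVec (Pi.single i 1) (Sig *ᵥ w) + vecMulVec (Sig *ᵥ w) (Pi.single i 1))
    + ((1 + w ⬝ᵥ Sig *ᵥ w / w i) / w i) • vecMulVec (Pi.single i 1) (Pi.single i 1)

lemma eqOffLine_lineCompletion : EqOffLine i (lineCompletion Sig i w) Sig := fun j k hj hk => by
  simp [lineCompletion, vecMulVec_apply, hj, hk]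

lemma lineCompletion_apply_self_right {j : n} (hj : j ≠ i) :
    lineCompletion Sig i w j i = Sig j i - (Sig *ᵥ w) j / w i := by
  simp [lineCompletion, vecMulVec_apply, hj, div_eq_inv_mul]

lemma isSymm_lineCompletion {Sig : Matrix n n K} (hSig : Sig.IsSymm) :
    (lineCompletion Sig i w).IsSymm := by
  simp only [IsSymm, lineCompletion, transpose_add, transpose_sub, transpose_smul,
    transpose_vecMulVec, hSig.eq, add_comm (vecMulVec (Sig *ᵥ w) _)]

lemma lineCompletion_mulVec {w : n → K} (hwi : w i ≠ 0) :
    lineCompletion Sig i w *ᵥ w = Pi.single i 1 := by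
  simp only [lineCompletion, add_mulVec, sub_mulVec, smul_mulVec, vecMulVec_mulVec, op_smul_eq_smul,
    single_dotProduct, one_mul, smul_add, dotProduct_comm (Sig *ᵥ w) w]
  ext j
  simp only [Pi.add_apply, Pi.sub_apply, Pi.smul_apply, smul_eq_mul]
  field_simp
  ring

end Completion

section PosDef

variable {i : n} {T T' : Matrix n n ℝ}

lemma PosDef.eq_zero_of_mulVec_apply_eq_zero {A : Matrix n n ℝ} (hA : A.PosDef) {v : n → ℝ}
    (hvi : v i = 0) (hAv : ∀ j, j ≠ i → (A *ᵥ v) j = 0) : v = 0 := by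
  have hquad : v ⬝ᵥ A *ᵥ v = 0 := by
    refine Finset.sum_eq_zero fun j _ => ?_
    by_cases hj : j = i
    · simp [hj, hvi]
    · simp [hAv j hj]
  by_contra hv
  simpa [hquad] using hA.dotProduct_mulVec_pos hv

/-- Writing `x = z + (xᵢ / wᵢ) w` with `zᵢ = 0` gives `xᵀ T x = zᵀ Sig z + xᵢ² / wᵢ`. -/
lemma posDef_of_mulVec_eq_single {Sig : Matrix n n ℝ} (hSig : Sig.PosDef)
    (hT : T.IsHermitian) (h : EqOffLine i T Sig) {w : n → ℝ} (hw : T *ᵥ w = Pi.single i 1)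
    (hwi : 0 < w i) : T.PosDef := by
  refine PosDef.of_dotProduct_mulVec_pos hT fun x hx => ?_
  set c := x i / w i
  set z := x - c • w
  have hzi : z i = 0 := by simp [z, c, hwi.ne']
  have hwTz : w ⬝ᵥ T *ᵥ z = 0 := by
    rw [dotProduct_mulVec, ← mulVec_transpose, (isHermitian_iff_isSymm.mp hT).eq, hw,
      single_dotProduct, one_mul, hzi]
  have hxz : x = z + c • w := by simp [z]
  have hquad : x ⬝ᵥ T *ᵥ x = z ⬝ᵥ Sig *ᵥ z + c ^ 2 * w i := by
    rw [← dotProduct_mulVec_eq_of_eqOffLine h hzi, hxz]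
    simp only [mulVec_add, mulVec_smul, hw, dotProduct_add, add_dotProduct, dotProduct_smul,
      smul_dotProduct, hwTz, dotProduct_single, Pi.add_apply, Pi.smul_apply, hzi, smul_eq_mul]
    ring
  rw [star_trivial, hquad]
  by_cases hz0 : z = 0
  · have hc : c ≠ 0 := fun hc => hx (by rw [hxz, hz0, hc, zero_smul, add_zero])
    simp only [hz0, zero_dotProduct, zero_add]
    positivity
  · have := hSig.dotProduct_mulVec_pos hz0
    rw [star_trivial] at this
    positivity

/-- Each column `v` of the difference has `vᵢ = 0` and `(T v)ⱼ = 0` for `j ≠ i`. -/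
lemma deflatedInv_eq (hT : T.PosDef) (hT' : T'.PosDef) (h : EqOffLine i T T') :
    deflatedInv i T = deflatedInv i T' := by
  have hrow : ∀ {M : Matrix n n ℝ}, M.PosDef → ∀ k, deflatedInv i M i k = 0 := fun hM =>
    deflatedInv_apply_self_left (isHermitian_iff_isSymm.mp hM.isHermitian) hM.inv.diag_pos.ne'
  refine sub_eq_zero.mp (ext_col fun k => ?_)
  refine hT.eq_zero_of_mulVec_apply_eq_zero (i := i) (by simp [hrow hT, hrow hT']) fun j hj => ?_
  have hT'J : (T * deflatedInv i T') j k = (T' * deflatedInv i T') j k := by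
    refine Finset.sum_congr rfl fun l _ => ?_
    by_cases hl : l = i
    · simp [hl, hrow hT']
    · simp only [h j l hj hl]
  change (T * (deflatedInv i T - deflatedInv i T')) j k = 0
  rw [Matrix.mul_sub, Matrix.sub_apply, hT'J, mul_deflatedInv_apply hT.det_pos.ne'.isUnit hj,
    mul_deflatedInv_apply hT'.det_pos.ne'.isUnit hj, sub_self]

lemma eq_of_col_inv_eq (hT : T.PosDef) (hT' : T'.PosDef) (h : EqOffLine i T T')
    (hcol : T⁻¹.col i = T'⁻¹.col i) : T = T' := by
  have hii : T⁻¹ i i = T'⁻¹ i i := congrFun hcol i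
  have hJ := deflatedInv_eq hT hT' h
  rw [deflatedInv, deflatedInv, hcol, hii, sub_left_inj] at hJ
  exact inv_inj hJ hT.det_pos.ne'.isUnit

lemma PosDef.exists_dotProduct_mulVec_add_eq {S : Matrix n n ℝ} (hS : S.PosDef)
    (W : Submodule ℝ (n → ℝ)) (u₀ : n → ℝ) :
    ∃ u, u - u₀ ∈ W ∧ ∀ d ∈ W, (u + d) ⬝ᵥ S *ᵥ (u + d) = u ⬝ᵥ S *ᵥ u + d ⬝ᵥ S *ᵥ d := by
  set B := (toBilin' S).restrict W
  have hpos : ∀ x : W, x ≠ 0 → B x x ≠ 0 := fun x hx => by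
    have := hS.dotProduct_mulVec_pos (x := (x : n → ℝ)) (by simpa using hx)
    simpa [B, toBilin'_apply'] using this.ne'
  have hB : B.Nondegenerate :=
    ⟨fun x hx => by_contra fun h => hpos x h (hx x), fun x hx => by_contra fun h => hpos x h (hx x)⟩
  -- `u = u₀ + v` solves the normal equations `uᵀ S x = 0`, `x ∈ W`
  obtain ⟨v, hv⟩ : ∃ v : W, v = (B.toDual hB).symm (-((toBilin' S u₀).comp W.subtype)) := ⟨_, rfl⟩
  obtain ⟨u, hu⟩ : ∃ u : n → ℝ, u = u₀ + v := ⟨_, rfl⟩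
  have hnormal : ∀ x ∈ W, u ⬝ᵥ S *ᵥ x = 0 := fun x hx => by
    have := LinearMap.BilinForm.apply_toDual_symm_apply (hB := hB)
      (-((toBilin' S u₀).comp W.subtype)) ⟨x, hx⟩
    rw [← hv] at this
    simp only [B, LinearMap.BilinForm.restrict_apply, LinearMap.domRestrict_apply,
      LinearMap.neg_apply, LinearMap.comp_apply, Submodule.subtype_apply, toBilin'_apply'] at this
    rw [hu, add_dotProduct, this, add_neg_cancel]
  refine ⟨u, by simp [hu], fun d hd => ?_⟩
  have hsymm : d ⬝ᵥ S *ᵥ u = u ⬝ᵥ S *ᵥ d := by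
    rw [dotProduct_mulVec, ← mulVec_transpose, (isHermitian_iff_isSymm.mp hS.isHermitian).eq,
      dotProduct_comm]
  rw [mulVec_add, dotProduct_add, add_dotProduct, add_dotProduct, hsymm, hnormal d hd]
  ring

end PosDef

end Matrix

theorem Set.BijOn.existsUnique_isMax {α β γ δ : Type*} [LE γ] [LE δ] {s : Set α} {t : Set β}
    {φ : α → β} (hφ : Set.BijOn φ s t) {f : α → γ} {g : β → δ}
    (hfg : ∀ a ∈ s, ∀ a' ∈ s, f a' ≤ f a ↔ g (φ a') ≤ g (φ a))
    (h : ∃! b, b ∈ t ∧ ∀ b' ∈ t, g b' ≤ g b) : ∃! a, a ∈ s ∧ ∀ a' ∈ s, f a' ≤ f a := by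
  obtain ⟨_, ⟨hb, hbmax⟩, huniq⟩ := h
  obtain ⟨a, ha, rfl⟩ := hφ.surjOn hb
  refine ⟨a, ⟨ha, fun a' ha' => (hfg a ha a' ha').2 (hbmax _ (hφ.mapsTo ha'))⟩, ?_⟩
  rintro a' ⟨ha', hmax'⟩
  refine hφ.injOn ha' ha (huniq _ ⟨hφ.mapsTo ha', fun b' hb' => ?_⟩)
  obtain ⟨a'', ha'', rfl⟩ := hφ.surjOn hb'
  exact (hfg a' ha' a'' ha'').1 (hmax' a'' ha'')

namespace GaussianSection

lemma log_sub_mul_le {x a : ℝ} (hx : 0 < x) (ha : 0 < a) :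
    Real.log x - x * a ≤ -Real.log a - 1 := by
  have h := Real.log_le_sub_one_of_pos (mul_pos hx ha)
  rw [Real.log_mul hx.ne' ha.ne'] at h
  linarith

lemma eq_inv_of_log_sub_mul_eq {x a : ℝ} (hx : 0 < x) (ha : 0 < a)
    (h : Real.log x - x * a = -Real.log a - 1) : x = a⁻¹ := by
  by_contra hne
  have hlt := Real.log_lt_sub_one_of_pos (mul_pos hx ha)
    fun h1 => hne (eq_inv_of_mul_eq_one_left h1)
  rw [Real.log_mul hx.ne' ha.ne'] at hlt
  linarith

variable {n : Type*} [Fintype n]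

noncomputable def reducedObjective (S : Matrix n n ℝ) (i : n) (w : n → ℝ) : ℝ :=
  Real.log (w i) - w ⬝ᵥ S *ᵥ w / w i

lemma reducedObjective_smul (S : Matrix n n ℝ) {i : n} {u : n → ℝ} (hu : u i = 1) (a : ℝ) :
    reducedObjective S i (a • u) = Real.log a - a * (u ⬝ᵥ S *ᵥ u) := by
  simp only [reducedObjective, Pi.smul_apply, hu, smul_eq_mul, mul_one, mulVec_smul,
    dotProduct_smul, smul_dotProduct]
  field_simp

variable [DecidableEq n]

theorem existsUnique_isMax_reducedObjective {S : Matrix n n ℝ} (hS : S.PosDef)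
    (W : Submodule ℝ (n → ℝ)) {i : n} (hW : ∃ w ∈ W, w i ≠ 0) :
    ∃! w, (w ∈ W ∧ 0 < w i) ∧
      ∀ w', w' ∈ W ∧ 0 < w' i → reducedObjective S i w' ≤ reducedObjective S i w := by
  obtain ⟨w₀, hw₀W, hw₀i⟩ := hW
  obtain ⟨u, hu, hpyth⟩ := hS.exists_dotProduct_mulVec_add_eq
    (W ⊓ LinearMap.ker (LinearMap.proj i)) ((w₀ i)⁻¹ • w₀)
  have huW : u ∈ W := by simpa using W.add_mem hu.1 (W.smul_mem (w₀ i)⁻¹ hw₀W)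
  have hui : u i = 1 := by simpa [hw₀i, sub_eq_zero] using hu.2
  set Q := u ⬝ᵥ S *ᵥ u
  have hQ : 0 < Q := by
    simpa using hS.dotProduct_mulVec_pos (x := u) fun h => by simp [h] at hui
  have hbound : ∀ w, w ∈ W ∧ 0 < w i → reducedObjective S i w ≤ -Real.log Q - 1 ∧
      (reducedObjective S i w = -Real.log Q - 1 → w = Q⁻¹ • u) := by
    rintro w ⟨hwW, hwi⟩
    set d := (w i)⁻¹ • w - u
    have hdW : d ∈ W ⊓ LinearMap.ker (LinearMap.proj i) :=
      ⟨W.sub_mem (W.smul_mem _ hwW) huW, by simp [d, hui, hwi.ne']⟩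
    have hw : w = w i • (u + d) := by simp [d, hwi.ne']
    have hdS : 0 ≤ d ⬝ᵥ S *ᵥ d := by simpa using hS.posSemidef.dotProduct_mulVec_nonneg d
    have hval : reducedObjective S i w = Real.log (w i) - w i * Q - w i * (d ⬝ᵥ S *ᵥ d) := by
      conv_lhs => rw [hw]
      rw [reducedObjective_smul S (by simp [d, hui, hwi.ne']), hpyth d hdW]
      ring
    have hlog := log_sub_mul_le hwi hQ
    refine ⟨by nlinarith, fun heq => ?_⟩
    have hd : d = 0 := by
      by_contra hne
      have := hS.dotProduct_mulVec_pos hne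
      rw [star_trivial] at this
      nlinarith
    rw [hw, hd, add_zero, eq_inv_of_log_sub_mul_eq hwi hQ (by nlinarith)]
  have hmax : reducedObjective S i (Q⁻¹ • u) = -Real.log Q - 1 := by
    rw [reducedObjective_smul S hui, Real.log_inv, inv_mul_cancel₀ hQ.ne']
  have hmem : Q⁻¹ • u ∈ W ∧ 0 < (Q⁻¹ • u) i := ⟨W.smul_mem _ huW, by simpa [hui] using hQ⟩
  refine ⟨Q⁻¹ • u, ⟨hmem, fun w hw => hmax ▸ (hbound w hw).1⟩, fun w ⟨hw, hwmax⟩ => ?_⟩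
  exact (hbound w hw).2 (le_antisymm (hbound w hw).1 (hmax ▸ hwmax _ hmem))

noncomputable def logLik (S T : Matrix n n ℝ) : ℝ :=
  -Real.log T.det - (T⁻¹ * S).trace

lemma logLik_eq (S : Matrix n n ℝ) {T : Matrix n n ℝ} (hT : T.PosDef) (i : n) :
    logLik S T = reducedObjective S i (T⁻¹.col i) - Real.log (adjugate T i i)
      - (deflatedInv i T * S).trace := by
  rw [← det_mul_inv_apply_self hT.det_pos.ne'.isUnit,
    Real.log_mul hT.det_pos.ne' hT.inv.diag_pos.ne', logLik, reducedObjective, trace_inv_mul_eq i]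
  simp only [col_apply]
  ring

lemma logLik_sub_reducedObjective_eq (S : Matrix n n ℝ) {i : n} {T T' : Matrix n n ℝ}
    (hT : T.PosDef) (hT' : T'.PosDef) (h : EqOffLine i T T') :
    logLik S T - reducedObjective S i (T⁻¹.col i) =
      logLik S T' - reducedObjective S i (T'⁻¹.col i) := by
  rw [logLik_eq S hT i, logLik_eq S hT' i, adjugate_apply_self_eq h, deflatedInv_eq hT hT' h]
  ring

def HasGraphPattern {α : Type*} [Zero α] (G : SimpleGraph n) (T : Matrix n n α) : Prop :=
  ∀ j k, j ≠ k → ¬ G.Adj j k → T j k = 0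

/-- The section `{T ∈ P(G) | T_{-i,-i} = Sig_{-i,-i}}` of the cone `P(G)`. -/
def coneSection (G : SimpleGraph n) (Sig : Matrix n n ℝ) (i : n) : Set (Matrix n n ℝ) :=
  {T | (T.PosDef ∧ HasGraphPattern G T) ∧ EqOffLine i T Sig}

/-- The equations of `T w = eᵢ` at the non-neighbours `j` of `i`: they involve no free entry of
`T`, since `Tⱼᵢ = Sigⱼᵢ = 0` there. -/
def admissible (G : SimpleGraph n) (Sig : Matrix n n ℝ) (i : n) : Submodule ℝ (n → ℝ) where
  carrier := {w | ∀ j, j ≠ i → ¬ G.Adj j i → (Sig *ᵥ w) j = 0}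
  add_mem' ha hb j hj hadj := by simp [mulVec_add, ha j hj hadj, hb j hj hadj]
  zero_mem' j _ _ := by simp
  smul_mem' c w hw j hj hadj := by simp [mulVec_smul, hw j hj hadj]

variable {G : SimpleGraph n} {Sig : Matrix n n ℝ} {i : n}

lemma col_inv_mem_admissible (hSigG : HasGraphPattern G Sig) {T : Matrix n n ℝ}
    (hT : T ∈ coneSection G Sig i) : T⁻¹.col i ∈ admissible G Sig i := by
  intro j hj hadj
  have hTj : (T *ᵥ T⁻¹.col i) j = 0 := by
    rw [mulVec_col_inv hT.1.1.det_pos.ne'.isUnit]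
    simp [hj]
  rw [← hTj]
  refine Finset.sum_congr rfl fun k _ => ?_
  by_cases hk : k = i
  · subst hk
    simp only [hSigG j k hj hadj, hT.1.2 j k hj hadj]
  · simp only [hT.2 j k hj hk]

lemma lineCompletion_mem_coneSection (hSig : Sig.PosDef) (hSigG : HasGraphPattern G Sig)
    {w : n → ℝ} (hw : w ∈ admissible G Sig i) (hwi : 0 < w i) :
    lineCompletion Sig i w ∈ coneSection G Sig i := by
  have hsymm := isSymm_lineCompletion i w (isHermitian_iff_isSymm.mp hSig.isHermitian)
  have hcol : ∀ j, j ≠ i → ¬ G.Adj j i → lineCompletion Sig i w j i = 0 := fun j hj hadj => by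
    rw [lineCompletion_apply_self_right Sig i w hj, hSigG j i hj hadj, hw j hj hadj, zero_div,
      sub_zero]
  refine ⟨⟨posDef_of_mulVec_eq_single hSig (isHermitian_iff_isSymm.mpr hsymm)
    (eqOffLine_lineCompletion Sig i w) (lineCompletion_mulVec Sig i hwi.ne') hwi, ?_⟩,
    eqOffLine_lineCompletion Sig i w⟩
  intro j k hjk hadj
  by_cases hk : k = i
  · subst hk
    exact hcol j hjk hadj
  by_cases hj : j = i
  · subst hj
    rw [hsymm.apply]
    exact hcol k hk fun h => hadj h.symm
  · rw [eqOffLine_lineCompletion Sig i w j k hj hk, hSigG j k hjk hadj]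

lemma bijOn_col_inv (hSig : Sig.PosDef) (hSigG : HasGraphPattern G Sig) :
    Set.BijOn (fun T => T⁻¹.col i) (coneSection G Sig i)
      {w | w ∈ admissible G Sig i ∧ 0 < w i} := by
  refine ⟨fun T hT => ⟨col_inv_mem_admissible hSigG hT, hT.1.1.inv.diag_pos⟩,
    fun T hT T' hT' h => eq_of_col_inv_eq hT.1.1 hT'.1.1 (hT.2.trans hT'.2.symm) h,
    fun w ⟨hw, hwi⟩ => ?_⟩
  have hmem := lineCompletion_mem_coneSection hSig hSigG hw hwi
  exact ⟨lineCompletion Sig i w, hmem, col_inv_eq_of_mulVec_eq_single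
    hmem.1.1.det_pos.ne'.isUnit (lineCompletion_mulVec Sig i hwi.ne')⟩

end GaussianSection

open GaussianSection in
theorem section_unique_maximizer_general {p : ℕ} (G : SimpleGraph (Fin p))
    (S Sig : Matrix (Fin p) (Fin p) ℝ) (hS : S.PosDef) (i : Fin p)
    (hSig : Sig.PosDef ∧ ∀ j k : Fin p, j ≠ k → ¬ G.Adj j k → Sig j k = 0) :
    ∃! T : Matrix (Fin p) (Fin p) ℝ,
      ((T.PosDef ∧ ∀ j k : Fin p, j ≠ k → ¬ G.Adj j k → T j k = 0) ∧
        (∀ j k : Fin p, j ≠ i → k ≠ i → T j k = Sig j k)) ∧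
      ∀ T' : Matrix (Fin p) (Fin p) ℝ,
        ((T'.PosDef ∧ ∀ j k : Fin p, j ≠ k → ¬ G.Adj j k → T' j k = 0) ∧
          (∀ j k : Fin p, j ≠ i → k ≠ i → T' j k = Sig j k)) →
        -Real.log T'.det - (T'⁻¹ * S).trace ≤ -Real.log T.det - (T⁻¹ * S).trace := by
  obtain ⟨hSigPD, hSigG⟩ := hSig
  have hSigMem : Sig ∈ coneSection G Sig i := ⟨⟨hSigPD, hSigG⟩, fun _ _ _ _ => rfl⟩
  have hreduced := existsUnique_isMax_reducedObjective hS (admissible G Sig i)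
    ⟨Sig⁻¹.col i, col_inv_mem_admissible hSigG hSigMem, hSigPD.inv.diag_pos.ne'⟩
  refine (bijOn_col_inv hSigPD hSigG).existsUnique_isMax (f := logLik S)
    (g := reducedObjective S i) (fun T hT T' hT' => ?_) hreduced
  have := logLik_sub_reducedObjective_eq S hT.1.1 hT'.1.1 (hT.2.trans hT'.2.symm)
  constructor <;> intro <;> linarith

/-- fixing `Σ_{-i,-i}`, the log-likelihood `ℓ(Σ̃) = -log det Σ̃ - tr(Σ̃⁻¹ S)`
has a unique maximizer among all `Σ̃ ∈ P(G)` agreeing with `Σ` outside row/column `i`,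
provided `S` is positive definite. -/
theorem section_unique_maximizer {p : ℕ} (G : SimpleGraph (Fin p)) [DecidableRel G.Adj]
    (S Sig : Matrix (Fin p) (Fin p) ℝ) (hS : S.PosDef) (i : Fin p)
    (hSig : Sig.PosDef ∧ ∀ j k : Fin p, j ≠ k → ¬ G.Adj j k → Sig j k = 0) :
    ∃! T : Matrix (Fin p) (Fin p) ℝ,
      ((T.PosDef ∧ ∀ j k : Fin p, j ≠ k → ¬ G.Adj j k → T j k = 0) ∧
        (∀ j k : Fin p, j ≠ i → k ≠ i → T j k = Sig j k)) ∧
      ∀ T' : Matrix (Fin p) (Fin p) ℝ,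
        ((T'.PosDef ∧ ∀ j k : Fin p, j ≠ k → ¬ G.Adj j k → T' j k = 0) ∧
          (∀ j k : Fin p, j ≠ i → k ≠ i → T' j k = Sig j k)) →
        -Real.log T'.det - (T'⁻¹ * S).trace ≤ -Real.log T.det - (T⁻¹ * S).trace :=
  section_unique_maximizer_general G S Sig hS i hSig
end
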